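/- A multigraph G on n vertices satisfies κ'(G) = τ(G) = k if and only if G has an edge cut of size k and G has a spanning subgraph belonging to F_{k,n}. -/

import Mathlib

open Finset

/-- A finite multigraph: a finite vertex set, a finite set of edge names,
and an endpoint assignment sending each edge to an unordered pair of vertices. -/
structure MG (α β : Type) where
  verts : Finset α
  edges : Finset β
  ends : β → Sym2 α
  wf : ∀ e ∈ edges, ∀ v ∈ ends e, v ∈ verts

variable {α β : Type} [DecidableEq α] [DecidableEq β]

namespace MG

def Adj (G : MG α β) (a b : α) : Prop := ∃ e ∈ G.edges, G.ends e = s(a, b)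

def Reach (G : MG α β) : α → α → Prop := Relation.ReflTransGen G.Adj

def Connected (G : MG α β) : Prop :=
  G.verts.Nonempty ∧ ∀ a ∈ G.verts, ∀ b ∈ G.verts, G.Reach a b

/-- Number of connected components. -/
noncomputable def omega (G : MG α β) : ℕ :=
  ((fun v => {u | G.Reach v u}) '' (G.verts : Set α)).ncard

def deleteEdges (G : MG α β) (X : Finset β) : MG α β :=
  ⟨G.verts, G.edges \ X, G.ends, fun e he => G.wf e (Finset.mem_sdiff.mp he).1⟩

def IsSubgraph (H G : MG α β) : Prop :=
  H.verts ⊆ G.verts ∧ H.edges ⊆ G.edges ∧ ∀ e ∈ H.edges, H.ends e = G.ends e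

def IsSpanningTree (G T : MG α β) : Prop :=
  IsSubgraph T G ∧ T.verts = G.verts ∧ T.Connected ∧ T.edges.card = T.verts.card - 1

/-- `G` contains `m` pairwise edge-disjoint spanning trees. -/
def HasTrees (G : MG α β) (m : ℕ) : Prop :=
  ∃ T : Fin m → MG α β, (∀ i, IsSpanningTree G (T i)) ∧
    ∀ i j, i ≠ j → Disjoint (T i).edges (T j).edges

/-- Maximum number of pairwise edge-disjoint spanning trees. -/
noncomputable def tau (G : MG α β) : ℕ := sSup {m | G.HasTrees m}

noncomputable def taubar (G : MG α β) : ℕ :=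
  sSup {m | ∃ H : MG α β, IsSubgraph H G ∧ H.Connected ∧ tau H = m}

/-- Edge connectivity: the least size of an edge set whose deletion disconnects. -/
noncomputable def kappa (G : MG α β) : ℕ :=
  sInf {n | ∃ X ⊆ G.edges, X.card = n ∧ ¬ (G.deleteEdges X).Connected}

noncomputable def kappabar (G : MG α β) : ℕ :=
  sSup {n | ∃ H : MG α β, IsSubgraph H G ∧ kappa H = n}

/-- Density `|E(G)| / (|V(G)| - ω(G))`. -/
noncomputable def dens (G : MG α β) : ℝ :=
  (G.edges.card : ℝ) / ((G.verts.card : ℝ) - (G.omega : ℝ))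

/-- Maximum density over nontrivial subgraphs. -/
noncomputable def gamma (G : MG α β) : ℝ :=
  sSup {x : ℝ | ∃ H : MG α β, IsSubgraph H G ∧ H.edges.Nonempty ∧ dens H = x}

noncomputable def eta (G : MG α β) : ℝ :=
  sInf {x : ℝ | ∃ X : Finset β, X ⊆ G.edges ∧ G.omega < (G.deleteEdges X).omega ∧
    x = (X.card : ℝ) / (((G.deleteEdges X).omega : ℝ) - (G.omega : ℝ))}

/-- A (minimal) edge cut. -/
def IsEdgeCut (G : MG α β) (X : Finset β) : Prop :=
  X ⊆ G.edges ∧ ¬ (G.deleteEdges X).Connected ∧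
    ∀ Y : Finset β, Y ⊂ X → (G.deleteEdges Y).Connected

def addEdge (G : MG α β) (e : β) (a b : α) (ha : a ∈ G.verts) (hb : b ∈ G.verts) :
    MG α β :=
  ⟨G.verts, insert e G.edges, Function.update G.ends e s(a, b), by
    intro f hf v hv
    by_cases hfe : f = e
    · subst hfe
      rw [Function.update_self] at hv
      rcases Sym2.mem_iff.mp hv with h | h <;> subst h <;> assumption
    · rw [Function.update_of_ne hfe] at hv
      exact G.wf f ((Finset.mem_insert.mp hf).resolve_left hfe) v hv⟩

/-- `G` is `k`-maximal: every subgraph has edge connectivity at most `k`, but adding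
any new edge between two distinct vertices creates a subgraph of edge connectivity
at least `k+1`. -/
def IsKMaximal (k : ℕ) (G : MG α β) : Prop :=
  G.kappabar ≤ k ∧
    ∀ (e : β) (_ : e ∉ G.edges) (a b : α) (ha : a ∈ G.verts) (hb : b ∈ G.verts),
      a ≠ b → k + 1 ≤ (G.addEdge e a b ha hb).kappabar

def IsK1 (G : MG α β) : Prop := G.verts.card = 1 ∧ G.edges = ∅

/-- `G` is the `k`-edge-join of `G₁` and `G₂`. -/
def IsEdgeJoin (G G₁ G₂ : MG α β) (k : ℕ) : Prop :=
  Disjoint G₁.verts G₂.verts ∧ IsSubgraph G₁ G ∧ IsSubgraph G₂ G ∧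
  G.verts = G₁.verts ∪ G₂.verts ∧
  ∃ K : Finset β, K.card = k ∧ Disjoint K (G₁.edges ∪ G₂.edges) ∧
    G.edges = G₁.edges ∪ G₂.edges ∪ K ∧
    ∀ e ∈ K, ∃ a ∈ G₁.verts, ∃ b ∈ G₂.verts, G.ends e = s(a, b)

def UniformlyDense (G : MG α β) (k : ℕ) : Prop := dens G = k ∧ gamma G = k

/-- Membership in `𝓕_{k,n}` : `κ' = τ = k`, `n` vertices, with `|E|` minimized. -/
def InFkn (G : MG α β) (k n : ℕ) : Prop :=
  kappa G = k ∧ tau G = k ∧ G.verts.card = n ∧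
    ∀ H : MG α β, kappa H = k ∧ tau H = k ∧ H.verts.card = n →
      G.edges.card ≤ H.edges.card

def InFk (G : MG α β) (k : ℕ) : Prop := ∃ n, 1 < n ∧ InFkn G k n

end MG
namespace MG

variable {α β : Type} [DecidableEq α] [DecidableEq β]

lemma connected_transfer {T G : MG α β} (hv : T.verts = G.verts)
    (hadj : ∀ a b, T.Adj a b → G.Adj a b) (hc : T.Connected) : G.Connected := by
  obtain ⟨hne, hr⟩ := hc
  refine ⟨hv ▸ hne, fun a ha b hb => ?_⟩
  have := hr a (by rw [hv]; exact ha) b (by rw [hv]; exact hb)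
  exact Relation.ReflTransGen.mono hadj _ _ this

lemma isSubgraph_trans {A B C : MG α β} (h1 : IsSubgraph A B) (h2 : IsSubgraph B C) :
    IsSubgraph A C :=
  ⟨h1.1.trans h2.1, h1.2.1.trans h2.2.1, fun e he => (h1.2.2 e he).trans (h2.2.2 e (h1.2.1 he))⟩

lemma hasTrees_zero (G : MG α β) : G.HasTrees 0 :=
  ⟨Fin.elim0, fun i => i.elim0, fun i j _ => i.elim0⟩

lemma hasTrees_le_cut {G : MG α β} {m : ℕ} (h : G.HasTrees m) {X : Finset β}
    (hX : X ⊆ G.edges) (hd : ¬ (G.deleteEdges X).Connected) : m ≤ X.card := by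
  obtain ⟨T, hT, hdisj⟩ := h
  have hmeet : ∀ i : Fin m, ∃ e, e ∈ (T i).edges ∩ X := by
    intro i
    by_contra hne
    push_neg at hne
    apply hd
    refine connected_transfer (hT i).2.1 ?_ (hT i).2.2.1
    rintro a b ⟨e, he, hends⟩
    refine ⟨e, Finset.mem_sdiff.mpr ⟨(hT i).1.2.1 he,
      fun hx => hne e (Finset.mem_inter.mpr ⟨he, hx⟩)⟩, ?_⟩
    show G.ends e = s(a, b)
    rw [← (hT i).1.2.2 e he]; exact hends
  choose f hf using hmeet
  have hinj : Function.Injective f := by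
    intro i j hij
    by_contra hne
    have hdij := hdisj i j hne
    have h1 := Finset.mem_inter.mp (hf i)
    have h2 := Finset.mem_inter.mp (hf j)
    exact (Finset.disjoint_left.mp hdij h1.1) (hij ▸ h2.1)
  calc m = (Finset.univ : Finset (Fin m)).card := by simp
    _ ≤ X.card := Finset.card_le_card_of_injOn f
        (fun i _ => (Finset.mem_inter.mp (hf i)).2) hinj.injOn

lemma hasTrees_mono {H G : MG α β} (hsub : IsSubgraph H G) (hv : H.verts = G.verts)
    {m : ℕ} (h : H.HasTrees m) : G.HasTrees m := by
  obtain ⟨T, hT, hd⟩ := h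
  exact ⟨T, fun i => ⟨isSubgraph_trans (hT i).1 hsub, (hT i).2.1.trans hv, (hT i).2.2⟩, hd⟩

lemma two_le_card_of_tau_eq {G : MG α β} {k : ℕ} (h : tau G = k) (hk : 0 < k) :
    2 ≤ G.verts.card := by
  by_contra hlt
  push_neg at hlt
  interval_cases hc : G.verts.card
  · -- no vertices : only 0 trees possible
    have hempty : G.verts = ∅ := Finset.card_eq_zero.mp hc
    have hsub : {m | G.HasTrees m} ⊆ {0} := by
      rintro m ⟨T, hT, -⟩
      by_contra hm
      have hmpos : 0 < m := Nat.pos_of_ne_zero hm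
      have hconn := (hT ⟨0, hmpos⟩).2.2.1.1
      rw [(hT ⟨0, hmpos⟩).2.1, hempty] at hconn
      exact absurd hconn (by simp)
    have : tau G = 0 := by
      unfold tau
      refine le_antisymm (csSup_le ⟨0, hasTrees_zero G⟩ fun m hm => ?_) (Nat.zero_le _)
      simpa using hsub hm
    omega
  · -- one vertex : unbounded trees
    obtain ⟨x, hx⟩ := Finset.card_eq_one.mp hc
    have hall : ∀ m, G.HasTrees m := by
      intro m
      refine ⟨fun _ => ⟨G.verts, ∅, G.ends, by simp⟩, fun i => ?_, fun i j _ => by simp⟩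
      refine ⟨⟨le_refl _, Finset.empty_subset _, by simp⟩, rfl, ⟨?_, ?_⟩, by simp [hx]⟩
      · simp [hx]
      · intro a ha b hb
        simp only [hx, Finset.mem_singleton] at ha hb
        subst ha; subst hb
        exact Relation.ReflTransGen.refl
    have hnb : ¬ BddAbove {m | G.HasTrees m} := by
      rintro ⟨b, hb⟩
      exact absurd (hb (hall (b + 1))) (by omega)
    have : tau G = 0 := by
      unfold tau
      rw [csSup_of_not_bddAbove hnb]
      simp
    omega

lemma bddAbove_trees {G : MG α β} (h2 : 2 ≤ G.verts.card) :
    BddAbove {m | G.HasTrees m} := by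
  refine ⟨G.edges.card, fun m hm => ?_⟩
  obtain ⟨T, hT, hdisj⟩ := hm
  have hne : ∀ i : Fin m, ∃ e, e ∈ (T i).edges := by
    intro i
    have hcard : (T i).edges.card = G.verts.card - 1 := by
      rw [(hT i).2.2.2, (hT i).2.1]
    have : 0 < (T i).edges.card := by omega
    obtain ⟨e, he⟩ := Finset.card_pos.mp this
    exact ⟨e, he⟩
  choose f hf using hne
  have hinj : Function.Injective f := by
    intro i j hij
    by_contra hne'
    exact (Finset.disjoint_left.mp (hdisj i j hne') (hf i)) (hij ▸ hf j)
  calc m = (Finset.univ : Finset (Fin m)).card := by simp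
    _ ≤ G.edges.card := Finset.card_le_card_of_injOn f
        (fun i _ => (hT i).1.2.1 (hf i)) hinj.injOn

lemma tau_spec {G : MG α β} {k : ℕ} (h : tau G = k) (hk : 0 < k) :
    G.HasTrees k ∧ ∀ m, G.HasTrees m → m ≤ k := by
  have h2 := two_le_card_of_tau_eq h hk
  have hbdd := bddAbove_trees h2
  have hne : {m | G.HasTrees m}.Nonempty := ⟨0, hasTrees_zero G⟩
  have hmem := Nat.sSup_mem hne hbdd
  unfold tau at h
  rw [h] at hmem
  exact ⟨hmem, fun m hm => h ▸ le_csSup hbdd hm⟩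

lemma tau_eq {G : MG α β} {k : ℕ} (hmem : G.HasTrees k)
    (hub : ∀ m, G.HasTrees m → m ≤ k) : tau G = k := by
  unfold tau
  exact le_antisymm (csSup_le ⟨0, hasTrees_zero G⟩ hub) (le_csSup ⟨k, hub⟩ hmem)

lemma kappa_eq' {G : MG α β} {k : ℕ} (X : Finset β) (hX : X ⊆ G.edges)
    (hcard : X.card ≤ k) (hdisc : ¬ (G.deleteEdges X).Connected)
    (hlb : ∀ Y ⊆ G.edges, ¬ (G.deleteEdges Y).Connected → k ≤ Y.card) : kappa G = k := by
  unfold kappa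
  have hmemS : X.card ∈ {n | ∃ X ⊆ G.edges, X.card = n ∧ ¬ (G.deleteEdges X).Connected} :=
    ⟨X, hX, rfl, hdisc⟩
  refine le_antisymm ((Nat.sInf_le hmemS).trans hcard) (le_csInf ⟨X.card, hmemS⟩ ?_)
  rintro n ⟨Y, hY, rfl, hYd⟩
  exact hlb Y hY hYd

lemma kappa_spec {G : MG α β} {k : ℕ} (h : kappa G = k) (hk : 0 < k) :
    ∃ X ⊆ G.edges, X.card = k ∧ ¬ (G.deleteEdges X).Connected ∧
      ∀ Y ⊆ G.edges, ¬ (G.deleteEdges Y).Connected → k ≤ Y.card := by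
  have hne : {n | ∃ X ⊆ G.edges, X.card = n ∧ ¬ (G.deleteEdges X).Connected}.Nonempty := by
    by_contra hcon
    rw [Set.not_nonempty_iff_eq_empty] at hcon
    unfold kappa at h
    rw [hcon] at h
    simp at h
    omega
  have hmem := Nat.sInf_mem hne
  unfold kappa at h
  obtain ⟨X, hX, hXc, hXd⟩ := hmem
  rw [h] at hXc
  refine ⟨X, hX, hXc, hXd, fun Y hY hYd => ?_⟩
  rw [← h]
  exact Nat.sInf_le ⟨Y, hY, rfl, hYd⟩

lemma disc_transfer {H G : MG α β} (hsub : IsSubgraph H G) (hv : H.verts = G.verts)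
    {X : Finset β} (hdisc : ¬ (G.deleteEdges X).Connected) :
    ¬ (H.deleteEdges (X ∩ H.edges)).Connected := by
  intro hc
  apply hdisc
  refine connected_transfer (T := H.deleteEdges (X ∩ H.edges)) (G := G.deleteEdges X) hv ?_ hc
  rintro a b ⟨e, he, hends⟩
  have he' := Finset.mem_sdiff.mp he
  refine ⟨e, Finset.mem_sdiff.mpr ⟨hsub.2.1 he'.1,
    fun hx => he'.2 (Finset.mem_inter.mpr ⟨hx, he'.1⟩)⟩, ?_⟩
  show G.ends e = s(a, b)
  rw [← hsub.2.2 e he'.1]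
  exact hends

end MG

/-- A multigraph `G` on `n` vertices satisfies `κ'(G) = τ(G) = k` iff `G` has an
edge cut of size `k` and a spanning subgraph in `𝓕_{k,n}`. -/
theorem stmt18 {α β : Type} [DecidableEq α] [DecidableEq β]
    (k n : ℕ) (hk : 0 < k) (G : MG α β) (hn : G.verts.card = n) :
    (MG.kappa G = k ∧ MG.tau G = k) ↔
      ((∃ X : Finset β, G.IsEdgeCut X ∧ X.card = k) ∧
        ∃ H : MG α β, MG.IsSubgraph H G ∧ H.verts = G.verts ∧ MG.InFkn H k n) := by
  constructor
  · rintro ⟨hκ, hτ⟩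
    obtain ⟨X, hXsub, hXcard, hXdisc, hXmin⟩ := MG.kappa_spec hκ hk
    obtain ⟨⟨T, hT, hTdisj⟩, hub⟩ := MG.tau_spec hτ hk
    constructor
    · refine ⟨X, ⟨hXsub, hXdisc, ?_⟩, hXcard⟩
      intro Y hY
      by_contra hYd
      have hle := hXmin Y ((subset_of_ssubset hY).trans hXsub) hYd
      have hlt := Finset.card_lt_card hY
      omega
    · -- build H as the union of the k edge-disjoint spanning trees
      have hEsub : (Finset.univ.biUnion fun i : Fin k => (T i).edges) ⊆ G.edges := by
        intro e he
        obtain ⟨i, -, hei⟩ := Finset.mem_biUnion.mp he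
        exact (hT i).1.2.1 hei
      set H : MG α β := ⟨G.verts, Finset.univ.biUnion fun i : Fin k => (T i).edges,
        G.ends, fun e he v hv => G.wf e (hEsub he) v hv⟩ with hH
      have hHsub : MG.IsSubgraph H G := ⟨Finset.Subset.refl _, hEsub, fun e _ => rfl⟩
      have hHtrees : H.HasTrees k := by
        refine ⟨T, fun i => ⟨⟨?_, ?_, ?_⟩, (hT i).2.1, (hT i).2.2⟩, hTdisj⟩
        · rw [(hT i).2.1]
        · exact Finset.subset_biUnion_of_mem (fun i : Fin k => (T i).edges)
            (Finset.mem_univ i)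
        · intro e he; exact (hT i).1.2.2 e he
      have hHtau : MG.tau H = k :=
        MG.tau_eq hHtrees fun m hm => hub m (MG.hasTrees_mono hHsub rfl hm)
      have hHkappa : MG.kappa H = k := by
        refine MG.kappa_eq' (X ∩ H.edges) Finset.inter_subset_right
          ((Finset.card_le_card Finset.inter_subset_left).trans hXcard.le)
          (MG.disc_transfer hHsub rfl hXdisc) ?_
        intro Y hY hYd
        exact MG.hasTrees_le_cut hHtrees hY hYd
      have hHedges : H.edges.card = k * (n - 1) := by
        show (Finset.univ.biUnion fun i : Fin k => (T i).edges).card = _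
        rw [Finset.card_biUnion fun i _ j _ hij => hTdisj i j hij]
        have hc : ∀ i : Fin k, (T i).edges.card = n - 1 := fun i => by
          rw [(hT i).2.2.2, (hT i).2.1, hn]
        rw [Finset.sum_congr rfl fun i _ => hc i]
        simp [mul_comm]
      refine ⟨H, hHsub, rfl, hHkappa, hHtau, hn, ?_⟩
      rintro H' ⟨hκ', hτ', hn'⟩
      obtain ⟨⟨T', hT', hTdisj'⟩, -⟩ := MG.tau_spec hτ' hk
      have hBsub : (Finset.univ.biUnion fun i : Fin k => (T' i).edges) ⊆ H'.edges := by
        intro e he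
        obtain ⟨i, -, hei⟩ := Finset.mem_biUnion.mp he
        exact (hT' i).1.2.1 hei
      have hBcard : (Finset.univ.biUnion fun i : Fin k => (T' i).edges).card = k * (n - 1) := by
        rw [Finset.card_biUnion fun i _ j _ hij => hTdisj' i j hij]
        have hc : ∀ i : Fin k, (T' i).edges.card = n - 1 := fun i => by
          rw [(hT' i).2.2.2, (hT' i).2.1, hn']
        rw [Finset.sum_congr rfl fun i _ => hc i]
        simp [mul_comm]
      calc H.edges.card = k * (n - 1) := hHedges
        _ = (Finset.univ.biUnion fun i : Fin k => (T' i).edges).card := hBcard.symm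
        _ ≤ H'.edges.card := Finset.card_le_card hBsub
  · rintro ⟨⟨X, ⟨hXsub, hXdisc, -⟩, hXcard⟩, H, hHsub, hHv, hκH, hτH, -, -⟩
    obtain ⟨hHtrees, -⟩ := MG.tau_spec hτH hk
    have hGtrees : G.HasTrees k := MG.hasTrees_mono hHsub hHv hHtrees
    refine ⟨MG.kappa_eq' X hXsub hXcard.le hXdisc
      (fun Y hY hYd => MG.hasTrees_le_cut hGtrees hY hYd),
      MG.tau_eq hGtrees fun m hm => (MG.hasTrees_le_cut hm hXsub hXdisc).trans hXcard.le⟩
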